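/- arXiv:1901.10442 — 2 statements merged into one kernel-verified Lean document; each statement's English description precedes it below -/
import Mathlib

section
/- Topological representation theorem for C-extensional U-rich EDC-lattices: Let D be an EDC-lattice satisfying (Ext Ô): a ≰ b → ∃c, a + c = 1 and b + c ≠ 1; (U-rich ≪): a ≪ b → ∃c, b + c = 1 and ¬(a C c); (U-rich Ĉ): ¬(a Ĉ b) → ∃c ∃d, a + c = 1, b + d = 1 and ¬(c C d); and (Ext C): a ≠ 1 → ∃b ≠ 0, ¬(a C b). Then there exist a topological space X which is compact, T1, semiregular (every closed subset of X is an intersection of regular closed sets) and weakly regular (for every nonempty open set a ⊆ X there is a nonempty open set b with Cl(b) ⊆ a), and a map h : D → (subsets of X) such that: every h(a) is regular closed; h is injective; h(0) = ∅, h(1) = X; h(a+b) = h(a) ∪ h(b); h(a·b) = Cl(Int(h(a) ∩ h(b))); a ≤ b iff h(a) ⊆ h(b); a C b iff h(a) ∩ h(b) ≠ ∅; a Ĉ b iff Int(h(a)) ∪ Int(h(b)) ≠ X; a ≪ b iff h(a) ⊆ Int(h(b)); and h is dually dense: for every regular closed α ≠ X there exists a ∈ D with α ⊆ h(a) and h(a)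 ≠ X. -/
/-!
The points of `X` are the maximal clans of `D` (prime upper sets whose elements are pairwise in
contact), `h a` is the set of maximal clans containing `a`, and the sets `(h c)ᶜ` form a basis of
the topology. Two filters all of whose elements are pairwise in contact lie in a common clan: by
the prime ideal theorem each extends to a prime filter, keeping the contact, and the union of the
two prime filters is a clan. This realizes `C`, and, through the two U-richness conditions and the
axioms (MĈ2) and (M≪2), also `Ĉ` and `≪`. Under (Ext C), `(h c)ᶜ ⊆ h b` holds exactly when
`b + c = 1`, which computes interiors; (Ext Ô) then makes every `h a` regular closed and `h` an
order embedding. The space is compact because the eventual limit of clans along an ultrafilter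
is again a clan.
-/

universe u

/-- Extended distributive contact lattice (EDC-lattice): a bounded distributive
lattice with contact `C`, dual contact `Cd` and nontangential part-of `Ll`
satisfying the 23 axioms. -/
structure EDC (D : Type u) [DistribLattice D] [BoundedOrder D] where
  C : D → D → Prop
  Cd : D → D → Prop
  Ll : D → D → Prop
  c1 : ∀ a b, C a b → a ≠ ⊥ ∧ b ≠ ⊥
  c2 : ∀ a a' b b', C a b → a ≤ a' → b ≤ b' → C a' b'
  c3 : ∀ a b c, C a (b ⊔ c) → C a b ∨ C a c
  c4 : ∀ a b, C a b → C b a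
  c5 : ∀ a b, a ⊓ b ≠ ⊥ → C a b
  cd1 : ∀ a b, Cd a b → a ≠ ⊤ ∧ b ≠ ⊤
  cd2 : ∀ a a' b b', Cd a b → a' ≤ a → b' ≤ b → Cd a' b'
  cd3 : ∀ a b c, Cd a (b ⊓ c) → Cd a b ∨ Cd a c
  cd4 : ∀ a b, Cd a b → Cd b a
  cd5 : ∀ a b, a ⊔ b ≠ ⊤ → Cd a b
  ll1 : Ll ⊥ ⊥
  ll2 : Ll ⊤ ⊤
  ll3 : ∀ a b, Ll a b → a ≤ b
  ll4 : ∀ a a' b b', a' ≤ a → Ll a b → b ≤ b' → Ll a' b'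
  ll5 : ∀ a b c, Ll a c → Ll b c → Ll (a ⊔ b) c
  ll6 : ∀ a b c, Ll c a → Ll c b → Ll c (a ⊓ b)
  ll7 : ∀ a b c d, Ll a b → Ll (b ⊓ c) d → Ll c (a ⊔ d) → Ll c d
  mc1 : ∀ a b c, C a b → Ll a c → C a (b ⊓ c)
  mc2 : ∀ a b c d, ¬ C a (b ⊓ c) → C a b → ¬ C (a ⊓ d) b → Cd d c
  mcd1 : ∀ a b c, Cd a b → Ll c a → Cd a (b ⊔ c)
  mcd2 : ∀ a b c d, ¬ Cd a (b ⊔ c) → Cd a b → ¬ Cd (a ⊔ d) b → C d c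
  mll1 : ∀ a b c, ¬ Cd a b → Ll (a ⊓ c) b → Ll c b
  mll2 : ∀ a b c, ¬ C a b → Ll b (a ⊔ c) → Ll b c

/-- A filter of a bounded (distributive) lattice. -/
def EDCFilter {D : Type u} [DistribLattice D] [BoundedOrder D] (F : Set D) : Prop :=
  ⊤ ∈ F ∧ (∀ a b : D, a ∈ F → a ≤ b → b ∈ F) ∧ (∀ a b : D, a ∈ F → b ∈ F → a ⊓ b ∈ F)

/-- An ideal of a bounded (distributive) lattice. -/
def EDCIdeal {D : Type u} [DistribLattice D] [BoundedOrder D] (I : Set D) : Prop :=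
  ⊥ ∈ I ∧ (∀ a b : D, a ∈ I → b ≤ a → b ∈ I) ∧ (∀ a b : D, a ∈ I → b ∈ I → a ⊔ b ∈ I)

/-- A prime filter: a proper filter such that `a ⊔ b ∈ F` implies `a ∈ F` or `b ∈ F`. -/
def PrimeFilter {D : Type u} [DistribLattice D] [BoundedOrder D] (F : Set D) : Prop :=
  EDCFilter F ∧ ⊥ ∉ F ∧ ∀ a b : D, a ⊔ b ∈ F → a ∈ F ∨ b ∈ F

/-- The canonical relation `R^c` between (prime) filters of an EDC-lattice. -/
def Rc {D : Type u} [DistribLattice D] [BoundedOrder D] (E : EDC D) (Γ Δ : Set D) : Prop :=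
  ∀ a b : D,
    (a ∈ Γ → b ∈ Δ → E.C a b) ∧
    (a ∉ Γ → b ∉ Δ → E.Cd a b) ∧
    (a ∈ Γ → b ∉ Δ → ¬ E.Ll a b) ∧
    (a ∉ Γ → b ∈ Δ → ¬ E.Ll b a)

open Set TopologicalSpace

namespace EDC

variable {D : Type u} [DistribLattice D] [BoundedOrder D]

theorem exists_primeFilter_superset {Q : D → Prop} (hmono : Monotone Q)
    (hsup : ∀ x y, Q (x ⊔ y) → Q x ∨ Q y) (hbot : ¬ Q ⊥) {F : Set D} (hF : EDCFilter F)
    (hQF : ∀ x ∈ F, Q x) : ∃ P, PrimeFilter P ∧ F ⊆ P ∧ ∀ x ∈ P, Q x := by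
  obtain ⟨htop, hup, hinf⟩ := hF
  let I : Order.Ideal D := Order.IsIdeal.toIdeal (I := {x | ¬ Q x})
    ⟨fun _ _ hxy hy hx => hy (hmono hxy hx), ⟨⊥, hbot⟩, fun x hx y hy =>
      ⟨x ⊔ y, fun h => (hsup x y h).elim hx hy, le_sup_left, le_sup_right⟩⟩
  let F' : Order.PFilter D := Order.IsPFilter.toPFilter (F := F)
    (.of_def ⟨⊤, htop⟩
      (fun x hx y hy => ⟨x ⊓ y, hinf x y hx hy, inf_le_left, inf_le_right⟩)
      fun hxy hx => hup _ _ hx hxy)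
  have hFI : Disjoint (F' : Set D) I := disjoint_left.2 fun x hx hxI => hxI (hQF x hx)
  obtain ⟨J, hJ, hIJ, hFJ⟩ := DistribLattice.prime_ideal_of_disjoint_filter_ideal hFI
  refine ⟨(J : Set D)ᶜ, ⟨⟨hJ.top_notMem, fun x y hx hxy hy => hx (J.lower hxy hy),
      fun x y hx hy hxy => (hJ.mem_or_mem hxy).elim hx hy⟩, fun h => h J.bot_mem,
      fun x y hxy => not_and_or.1 fun h => hxy (J.sup_mem h.1 h.2)⟩,
    fun x hx => disjoint_left.1 hFJ hx, fun x hx => not_not.1 fun hQ => hx (hIJ hQ)⟩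

theorem edcFilter_Ici (a : D) : EDCFilter (Ici a) :=
  ⟨le_top, fun _ _ hx hxy => hx.trans hxy, fun _ _ hx hy => le_inf hx hy⟩

theorem edcFilter_sup_eq_top (a : D) : EDCFilter {c | a ⊔ c = ⊤} := by
  refine ⟨sup_top_eq a, fun x y hx hxy => top_le_iff.1 (hx ▸ sup_le_sup_left hxy a),
    fun x y hx hy => ?_⟩
  simp_all [sup_inf_left]

structure IsClan (E : EDC D) (Γ : Set D) : Prop where
  top_mem : ⊤ ∈ Γ
  bot_notMem : ⊥ ∉ Γ
  isUpperSet : IsUpperSet Γ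
  mem_or_mem {x y : D} : x ⊔ y ∈ Γ → x ∈ Γ ∨ y ∈ Γ
  contact {x y : D} : x ∈ Γ → y ∈ Γ → E.C x y

variable {E : EDC D}

theorem IsClan.sup_mem_iff {Γ : Set D} (hΓ : IsClan E Γ) {x y : D} :
    x ⊔ y ∈ Γ ↔ x ∈ Γ ∨ y ∈ Γ :=
  ⟨hΓ.mem_or_mem, fun h => h.elim (hΓ.isUpperSet le_sup_left) (hΓ.isUpperSet le_sup_right)⟩

theorem _root_.PrimeFilter.isClan {P : Set D} (hP : PrimeFilter P) : IsClan E P where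
  top_mem := hP.1.1
  bot_notMem := hP.2.1
  isUpperSet _ _ hxy hx := hP.1.2.1 _ _ hx hxy
  mem_or_mem := hP.2.2 _ _
  contact hx hy := E.c5 _ _ fun h => hP.2.1 (h ▸ hP.1.2.2 _ _ hx hy)

theorem IsClan.union {Γ Δ : Set D} (hΓ : IsClan E Γ) (hΔ : IsClan E Δ)
    (hΓΔ : ∀ x ∈ Γ, ∀ y ∈ Δ, E.C x y) : IsClan E (Γ ∪ Δ) where
  top_mem := Or.inl hΓ.top_mem
  bot_notMem h := h.elim hΓ.bot_notMem hΔ.bot_notMem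
  isUpperSet := hΓ.isUpperSet.union hΔ.isUpperSet
  mem_or_mem := by
    rintro x y (h | h)
    · exact (hΓ.mem_or_mem h).imp Or.inl Or.inl
    · exact (hΔ.mem_or_mem h).imp Or.inr Or.inr
  contact := by
    rintro x y (hx | hx) (hy | hy)
    exacts [hΓ.contact hx hy, hΓΔ x hx y hy, E.c4 _ _ (hΓΔ y hy x hx), hΔ.contact hx hy]

theorem isClan_setOf_eventually_mem {ι : Type*} {Γ : ι → Set D} (hΓ : ∀ i, IsClan E (Γ i))
    (U : Ultrafilter ι) : IsClan E {x | ∀ᶠ i in U, x ∈ Γ i} where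
  top_mem := .of_forall fun i => (hΓ i).top_mem
  bot_notMem h := h.exists.elim fun i => (hΓ i).bot_notMem
  isUpperSet _ _ hxy hx := hx.mono fun i => (hΓ i).isUpperSet hxy
  mem_or_mem h := Ultrafilter.eventually_or.1 (h.mono fun i => (hΓ i).mem_or_mem)
  contact hx hy := (hx.and hy).exists.elim fun i hi => (hΓ i).contact hi.1 hi.2

theorem isClan_sUnion {c : Set (Set D)} (hc : ∀ Γ ∈ c, IsClan E Γ)
    (hchain : IsChain (· ⊆ ·) c) (hne : c.Nonempty) : IsClan E (⋃₀ c) where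
  top_mem := hne.elim fun Γ hΓ => ⟨Γ, hΓ, (hc Γ hΓ).top_mem⟩
  bot_notMem := fun ⟨Γ, hΓ, h⟩ => (hc Γ hΓ).bot_notMem h
  isUpperSet := isUpperSet_sUnion fun Γ hΓ => (hc Γ hΓ).isUpperSet
  mem_or_mem := fun ⟨Γ, hΓ, h⟩ =>
    ((hc Γ hΓ).mem_or_mem h).imp (⟨Γ, hΓ, ·⟩) (⟨Γ, hΓ, ·⟩)
  contact := by
    rintro x y ⟨Γ, hΓ, hx⟩ ⟨Δ, hΔ, hy⟩
    rcases hchain.total hΓ hΔ with h | h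
    exacts [(hc Δ hΔ).contact (h hx) hy, (hc Γ hΓ).contact hx (h hy)]

variable (E) in
def MaxClan : Type u := {Γ : Set D // Maximal (IsClan E) Γ}

theorem MaxClan.isClan (Γ : MaxClan E) : IsClan E Γ.1 := Γ.2.prop

theorem IsClan.exists_maxClan {Γ : Set D} (hΓ : IsClan E Γ) : ∃ Δ : MaxClan E, Γ ⊆ Δ.1 :=
  let ⟨Δ, hΓΔ, hΔ⟩ := zorn_subset_nonempty {Δ | IsClan E Δ} (fun c hc hchain hne =>
    ⟨⋃₀ c, isClan_sUnion hc hchain hne, fun _ => subset_sUnion_of_mem⟩) Γ hΓ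
  ⟨⟨Δ, hΔ⟩, hΓΔ⟩

theorem exists_primeFilter_contact {F G : Set D} (hF : EDCFilter F) (hG : EDCFilter G)
    (hFG : ∀ x ∈ F, ∀ y ∈ G, E.C x y) :
    ∃ P, PrimeFilter P ∧ F ⊆ P ∧ ∀ x ∈ P, ∀ y ∈ G, E.C x y := by
  refine exists_primeFilter_superset (Q := fun x => ∀ y ∈ G, E.C x y)
    (fun x x' hxx' hx y hy => E.c2 _ _ _ _ (hx y hy) hxx' le_rfl)
    (fun x x' h => ?_) (fun h => (E.c1 _ _ (h ⊤ hG.1)).1 rfl) hF hFG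
  by_contra! ⟨⟨y, hy, hxy⟩, ⟨y', hy', hxy'⟩⟩
  rcases E.c3 _ _ _ (E.c4 _ _ (h _ (hG.2.2 y y' hy hy'))) with h | h
  · exact hxy (E.c4 _ _ (E.c2 _ _ _ _ h inf_le_left le_rfl))
  · exact hxy' (E.c4 _ _ (E.c2 _ _ _ _ h inf_le_right le_rfl))

theorem exists_clan_of_contact {F G : Set D} (hF : EDCFilter F) (hG : EDCFilter G)
    (hFG : ∀ x ∈ F, ∀ y ∈ G, E.C x y) : ∃ Γ, IsClan E Γ ∧ F ⊆ Γ ∧ G ⊆ Γ := by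
  obtain ⟨P, hP, hFP, hPG⟩ := exists_primeFilter_contact hF hG hFG
  obtain ⟨P', hP', hGP', hP'P⟩ := exists_primeFilter_contact hG hP.1
    fun y hy x hx => E.c4 _ _ (hPG x hx y hy)
  exact ⟨P ∪ P', hP.isClan.union hP'.isClan fun x hx y hy => E.c4 _ _ (hP'P y hy x hx),
    subset_union_of_subset_left hFP _, subset_union_of_subset_right hGP' _⟩

variable (E) in
/-- The representation map `h` of the paper. -/
def rep (a : D) : Set (MaxClan E) := {Γ | a ∈ Γ.1}

theorem rep_bot : rep E ⊥ = ∅ := eq_empty_of_forall_notMem fun Γ => Γ.isClan.bot_notMem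

theorem rep_top : rep E ⊤ = univ := eq_univ_of_forall fun Γ => Γ.isClan.top_mem

theorem rep_sup (a b : D) : rep E (a ⊔ b) = rep E a ∪ rep E b :=
  ext fun Γ => Γ.isClan.sup_mem_iff

theorem c_iff_rep_inter_nonempty {a b : D} : E.C a b ↔ (rep E a ∩ rep E b).Nonempty := by
  refine ⟨fun h => ?_, fun ⟨Γ, ha, hb⟩ => Γ.isClan.contact ha hb⟩
  obtain ⟨Γ, hΓ, haΓ, hbΓ⟩ := exists_clan_of_contact (edcFilter_Ici a) (edcFilter_Ici b)
    fun x hx y hy => E.c2 _ _ _ _ h hx hy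
  obtain ⟨Δ, hΓΔ⟩ := hΓ.exists_maxClan
  exact ⟨Δ, hΓΔ (haΓ le_rfl), hΓΔ (hbΓ le_rfl)⟩

theorem rep_nonempty {a : D} (ha : a ≠ ⊥) : (rep E a).Nonempty :=
  (c_iff_rep_inter_nonempty.1 (E.c5 a a (by rwa [inf_idem]))).mono inter_subset_left

/-- The `Ext C` condition of the paper. -/
def ExtC (E : EDC D) : Prop := ∀ a : D, a ≠ ⊤ → ∃ b : D, b ≠ ⊥ ∧ ¬ E.C a b

variable (D) in
/-- The `Ext Ô` condition of the paper. -/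
def ExtO : Prop :=
  ∀ a b : D, ¬ a ≤ b → ∃ c : D, a ⊔ c = ⊤ ∧ b ⊔ c ≠ ⊤

theorem exists_notMem_of_ne_top (hC : E.ExtC) {a : D} (ha : a ≠ ⊤) :
    ∃ Γ : MaxClan E, a ∉ Γ.1 := by
  obtain ⟨b, hb, hab⟩ := hC a ha
  obtain ⟨Γ, hbΓ⟩ := rep_nonempty (E := E) hb
  exact ⟨Γ, fun haΓ => hab (Γ.isClan.contact haΓ hbΓ)⟩

instance : TopologicalSpace (MaxClan E) := generateFrom (range fun c => (rep E c)ᶜ)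

theorem isTopologicalBasis_compl_rep : IsTopologicalBasis (range fun c => (rep E c)ᶜ) where
  exists_subset_inter := by
    rintro _ ⟨c, rfl⟩ _ ⟨d, rfl⟩ Γ hΓ
    exact ⟨(rep E (c ⊔ d))ᶜ, ⟨c ⊔ d, rfl⟩, by rwa [rep_sup, compl_union], by
      rw [rep_sup, compl_union]⟩
  sUnion_eq := sUnion_eq_univ_iff.2 fun _ => ⟨_, ⟨⊥, rfl⟩, by simp [rep_bot]⟩
  eq_generateFrom := rfl

theorem isClosed_rep (a : D) : IsClosed (rep E a) :=
  isOpen_compl_iff.1 (isTopologicalBasis_compl_rep.isOpen ⟨a, rfl⟩)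

theorem mem_interior_iff_compl_rep_subset {s : Set (MaxClan E)} {Γ : MaxClan E} :
    Γ ∈ interior s ↔ ∃ c ∉ Γ.1, (rep E c)ᶜ ⊆ s := by
  simp [mem_interior_iff_mem_nhds, isTopologicalBasis_compl_rep.mem_nhds_iff, rep]

theorem exists_rep_of_isClosed {F : Set (MaxClan E)} (hF : IsClosed F) {Γ : MaxClan E}
    (hΓ : Γ ∉ F) : ∃ c, F ⊆ rep E c ∧ c ∉ Γ.1 := by
  obtain ⟨c, hcΓ, hc⟩ :=
    mem_interior_iff_compl_rep_subset.1 (by rwa [hF.isOpen_compl.interior_eq])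
  exact ⟨c, compl_subset_compl.1 hc, hcΓ⟩

theorem compl_rep_subset_rep_iff (hC : E.ExtC) {b c : D} :
    (rep E c)ᶜ ⊆ rep E b ↔ b ⊔ c = ⊤ := by
  refine ⟨fun h => by_contra fun hbc => ?_, fun h Γ hcΓ => ?_⟩
  · obtain ⟨Γ, hΓ⟩ := exists_notMem_of_ne_top hC hbc
    rw [Γ.isClan.sup_mem_iff, not_or] at hΓ
    exact hΓ.1 (h hΓ.2)
  · have := Γ.isClan.top_mem
    rw [← h, Γ.isClan.sup_mem_iff] at this
    exact this.resolve_right hcΓ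

theorem mem_interior_rep_iff (hC : E.ExtC) {b : D} {Γ : MaxClan E} :
    Γ ∈ interior (rep E b) ↔ ∃ c ∉ Γ.1, b ⊔ c = ⊤ := by
  simp only [mem_interior_iff_compl_rep_subset, compl_rep_subset_rep_iff hC]

theorem exists_mem_interior_rep_notMem (hC : E.ExtC) (hO : ExtO D) {a b : D}
    (hab : ¬ a ≤ b) : ∃ Γ ∈ interior (rep E a), b ∉ Γ.1 := by
  obtain ⟨c, hac, hbc⟩ := hO a b hab
  obtain ⟨Γ, hΓ⟩ := exists_notMem_of_ne_top hC hbc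
  rw [Γ.isClan.sup_mem_iff, not_or] at hΓ
  exact ⟨Γ, (mem_interior_rep_iff hC).2 ⟨c, hΓ.2, hac⟩, hΓ.1⟩

theorem rep_subset_rep_iff (hC : E.ExtC) (hO : ExtO D) {a b : D} :
    rep E a ⊆ rep E b ↔ a ≤ b := by
  refine ⟨fun h => by_contra fun hab => ?_, fun hab Γ ha => Γ.isClan.isUpperSet hab ha⟩
  obtain ⟨Γ, hΓa, hΓb⟩ := exists_mem_interior_rep_notMem hC hO hab
  exact hΓb (h (interior_subset hΓa))

theorem rep_injective (hC : E.ExtC) (hO : ExtO D) : Function.Injective (rep E) :=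
  fun _ _ hab =>
    ((rep_subset_rep_iff hC hO).1 hab.le).antisymm ((rep_subset_rep_iff hC hO).1 hab.ge)

theorem closure_interior_rep (hC : E.ExtC) (hO : ExtO D) (a : D) :
    closure (interior (rep E a)) = rep E a := by
  refine (closure_minimal interior_subset (isClosed_rep a)).antisymm fun Γ haΓ => ?_
  rw [isTopologicalBasis_compl_rep.mem_closure_iff]
  rintro _ ⟨c, rfl⟩ hcΓ
  obtain ⟨Δ, hΔa, hΔc⟩ := exists_mem_interior_rep_notMem hC hO
    fun hac => hcΓ (Γ.isClan.isUpperSet hac haΓ)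
  exact ⟨Δ, hΔc, hΔa⟩

theorem rep_inf (hC : E.ExtC) (hO : ExtO D) (a b : D) :
    rep E (a ⊓ b) = closure (interior (rep E a ∩ rep E b)) := by
  have : interior (rep E (a ⊓ b)) = interior (rep E a ∩ rep E b) := by
    ext Γ
    simp only [mem_interior_iff_compl_rep_subset, subset_inter_iff,
      compl_rep_subset_rep_iff hC, sup_inf_right, inf_eq_top_iff]
  rw [← this, closure_interior_rep hC hO]

theorem ll_of_not_c_of_sup_eq_top {a b c : D} (hbc : b ⊔ c = ⊤) (hac : ¬ E.C a c) :
    E.Ll a b :=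
  E.mll2 c a b (fun h => hac (E.c4 _ _ h))
    (E.ll4 ⊤ a ⊤ _ le_top E.ll2 (sup_comm c b ▸ hbc).ge)

theorem ll_iff_rep_subset_interior (hC : E.ExtC)
    (hU : ∀ a b : D, E.Ll a b → ∃ c : D, b ⊔ c = ⊤ ∧ ¬ E.C a c) {a b : D} :
    E.Ll a b ↔ rep E a ⊆ interior (rep E b) := by
  refine ⟨fun h Γ haΓ => ?_, fun h => by_contra fun hab => ?_⟩
  · obtain ⟨c, hbc, hac⟩ := hU a b h
    exact (mem_interior_rep_iff hC).2 ⟨c, fun hcΓ => hac (Γ.isClan.contact haΓ hcΓ), hbc⟩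
  · have hac : ∀ c, b ⊔ c = ⊤ → E.C a c := fun c hbc =>
      not_not.1 fun hac => hab (ll_of_not_c_of_sup_eq_top hbc hac)
    obtain ⟨Γ, hΓ, haΓ, hbΓ⟩ := exists_clan_of_contact (edcFilter_Ici a)
      (edcFilter_sup_eq_top b) fun x hx c hbc => E.c2 _ _ _ _ (hac c hbc) hx le_rfl
    obtain ⟨Δ, hΓΔ⟩ := hΓ.exists_maxClan
    obtain ⟨c, hcΔ, hbc⟩ := (mem_interior_rep_iff hC).1 (h (hΓΔ (haΓ le_rfl)))
    exact hcΔ (hΓΔ (hbΓ hbc))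

theorem c_of_cd_of_sup_eq_top {a b c d : D} (h : E.Cd a b) (hac : a ⊔ c = ⊤)
    (hbd : b ⊔ d = ⊤) : E.C c d :=
  E.mcd2 a b d c (fun h' => (E.cd1 _ _ h').2 hbd) h fun h' => (E.cd1 _ _ h').1 hac

theorem cd_iff_interior_rep_union_ne_univ (hC : E.ExtC)
    (hU : ∀ a b : D, ¬ E.Cd a b → ∃ c d : D, a ⊔ c = ⊤ ∧ b ⊔ d = ⊤ ∧ ¬ E.C c d)
    {a b : D} : E.Cd a b ↔ interior (rep E a) ∪ interior (rep E b) ≠ univ := by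
  refine ⟨fun h => ?_, fun h => by_contra fun hab => h ?_⟩
  · obtain ⟨Γ, hΓ, haΓ, hbΓ⟩ := exists_clan_of_contact (edcFilter_sup_eq_top a)
      (edcFilter_sup_eq_top b) fun c hac d hbd => c_of_cd_of_sup_eq_top h hac hbd
    obtain ⟨Δ, hΓΔ⟩ := hΓ.exists_maxClan
    refine (ne_univ_iff_exists_notMem _).2 ⟨Δ, ?_⟩
    simp only [mem_union, mem_interior_rep_iff hC, not_or, not_exists, not_and]
    exact ⟨fun c hcΔ hac => hcΔ (hΓΔ (haΓ hac)), fun d hdΔ hbd => hdΔ (hΓΔ (hbΓ hbd))⟩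
  · obtain ⟨c, d, hac, hbd, hcd⟩ := hU a b hab
    refine eq_univ_of_forall fun Γ => ?_
    simp only [mem_union, mem_interior_rep_iff hC]
    by_cases hcΓ : c ∈ Γ.1
    · exact Or.inr ⟨d, fun hdΓ => hcd (Γ.isClan.contact hcΓ hdΓ), hbd⟩
    · exact Or.inl ⟨c, hcΓ, hac⟩

instance : CompactSpace (MaxClan E) := by
  refine ⟨isCompact_iff_ultrafilter_le_nhds.2 fun U _ => ?_⟩
  obtain ⟨Δ, hΔ⟩ :=
    (isClan_setOf_eventually_mem (fun Γ : MaxClan E => Γ.isClan) U).exists_maxClan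
  refine ⟨Δ, mem_univ _, isTopologicalBasis_compl_rep.nhds_hasBasis.ge_iff.2 ?_⟩
  rintro _ ⟨⟨c, rfl⟩, hcΔ⟩
  exact Ultrafilter.eventually_not.2 fun hc => hcΔ (hΔ hc)

instance : T1Space (MaxClan E) := by
  refine ⟨fun Γ => ?_⟩
  have : {Γ} = ⋂ c ∈ Γ.1, rep E c := by
    ext Δ
    simp only [mem_singleton_iff, mem_iInter₂]
    exact ⟨fun h _ hc => h ▸ hc, fun h => Subtype.ext (Γ.2.eq_of_subset Δ.isClan h).symm⟩
  rw [this]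
  exact isClosed_biInter fun c _ => isClosed_rep c

theorem eq_sInter_rep_of_isClosed {F : Set (MaxClan E)} (hF : IsClosed F) :
    F = ⋂₀ (rep E '' {c | F ⊆ rep E c}) := by
  refine (subset_sInter ?_).antisymm fun Γ hΓ => by_contra fun hΓF => ?_
  · rintro _ ⟨c, hc, rfl⟩
    exact hc
  obtain ⟨c, hFc, hcΓ⟩ := exists_rep_of_isClosed hF hΓF
  exact hcΓ (hΓ _ ⟨c, hFc, rfl⟩)

theorem exists_isOpen_closure_subset (hC : E.ExtC) (hO : ExtO D) {U : Set (MaxClan E)}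
    (hU : IsOpen U) (hne : U.Nonempty) : ∃ V, IsOpen V ∧ V.Nonempty ∧ closure V ⊆ U := by
  obtain ⟨Γ, hΓ⟩ := hne
  obtain ⟨c, hcΓ, hcU⟩ := mem_interior_iff_compl_rep_subset.1 (by rwa [hU.interior_eq])
  obtain ⟨b, hb, hcb⟩ := hC c fun h => hcΓ (h ▸ Γ.isClan.top_mem)
  refine ⟨interior (rep E b), isOpen_interior, ?_, ?_⟩
  · refine nonempty_iff_ne_empty.2 fun h => (rep_nonempty (E := E) hb).ne_empty ?_
    rw [← closure_interior_rep hC hO b, h, closure_empty]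
  · rw [closure_interior_rep hC hO]
    exact fun Δ hbΔ => hcU fun hcΔ => hcb (Δ.isClan.contact hcΔ hbΔ)

theorem exists_rep_ne_univ_of_isClosed {F : Set (MaxClan E)} (hF : IsClosed F)
    (hne : F ≠ univ) : ∃ a, F ⊆ rep E a ∧ rep E a ≠ univ := by
  obtain ⟨Γ, hΓ⟩ := (ne_univ_iff_exists_notMem F).1 hne
  obtain ⟨c, hFc, hcΓ⟩ := exists_rep_of_isClosed hF hΓ
  exact ⟨c, hFc, (ne_univ_iff_exists_notMem _).2 ⟨Γ, hcΓ⟩⟩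

end EDC

/-- topological representation theorem for C-extensional U-rich
EDC-lattices, in compact weakly regular T1 spaces. -/
theorem stmt17 {D : Type u} [DistribLattice D] [BoundedOrder D] (E : EDC D)
    (hExtO : ∀ a b : D, ¬ a ≤ b → ∃ c : D, a ⊔ c = ⊤ ∧ b ⊔ c ≠ ⊤)
    (hUll : ∀ a b : D, E.Ll a b → ∃ c : D, b ⊔ c = ⊤ ∧ ¬ E.C a c)
    (hUcd : ∀ a b : D, ¬ E.Cd a b → ∃ c d : D, a ⊔ c = ⊤ ∧ b ⊔ d = ⊤ ∧ ¬ E.C c d)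
    (hExtC : ∀ a : D, a ≠ ⊤ → ∃ b : D, b ≠ ⊥ ∧ ¬ E.C a b) :
    ∃ (X : Type u) (_ : TopologicalSpace X) (h : D → Set X),
      CompactSpace X ∧ T1Space X ∧
      (∀ F : Set X, IsClosed F →
        ∃ S : Set (Set X), (∀ s ∈ S, closure (interior s) = s) ∧ F = ⋂₀ S) ∧
      (∀ a : Set X, IsOpen a → a ≠ ∅ → ∃ b : Set X, IsOpen b ∧ b ≠ ∅ ∧ closure b ⊆ a) ∧
      (∀ a : D, closure (interior (h a)) = h a) ∧
      Function.Injective h ∧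
      h ⊥ = ∅ ∧ h ⊤ = Set.univ ∧
      (∀ a b : D, h (a ⊔ b) = h a ∪ h b) ∧
      (∀ a b : D, h (a ⊓ b) = closure (interior (h a ∩ h b))) ∧
      (∀ a b : D, a ≤ b ↔ h a ⊆ h b) ∧
      (∀ a b : D, E.C a b ↔ h a ∩ h b ≠ ∅) ∧
      (∀ a b : D, E.Cd a b ↔ interior (h a) ∪ interior (h b) ≠ Set.univ) ∧
      (∀ a b : D, E.Ll a b ↔ h a ⊆ interior (h b)) ∧
      (∀ α : Set X, closure (interior α) = α → α ≠ Set.univ →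
        ∃ a : D, α ⊆ h a ∧ h a ≠ Set.univ) := by
  open EDC in
  refine ⟨MaxClan E, inferInstance, rep E, inferInstance, inferInstance,
    fun F hF => ⟨_, ?_, eq_sInter_rep_of_isClosed hF⟩, fun U hU hne => ?_,
    closure_interior_rep hExtC hExtO, rep_injective hExtC hExtO, rep_bot, rep_top, rep_sup,
    rep_inf hExtC hExtO, fun a b => (rep_subset_rep_iff hExtC hExtO).symm,
    fun a b => c_iff_rep_inter_nonempty.trans nonempty_iff_ne_empty,
    fun a b => cd_iff_interior_rep_union_ne_univ hExtC hUcd,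
    fun a b => ll_iff_rep_subset_interior hExtC hUll,
    fun α hα hne => exists_rep_ne_univ_of_isClosed (hα ▸ isClosed_closure) hne⟩
  · rintro _ ⟨c, -, rfl⟩
    exact closure_interior_rep hExtC hExtO c
  · obtain ⟨V, hV, hVne, hVU⟩ :=
      exists_isOpen_closure_subset hExtC hExtO hU (nonempty_iff_ne_empty.2 hne)
    exact ⟨V, hV, hVne.ne_empty, hVU⟩
end

section
/- In an EDC-lattice D, every co-cluster is a minimal E-filter, i.e., if Γ is a co-cluster then there is no E-filter Δ with Δ ⊊ Γ. -/
universe u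

/-- An E-filter of an EDC-lattice: a proper filter `Γ` such that `a ∉ Γ` and `b ∉ Γ`
imply `a Ĉ b`. -/
def IsEFilter {D : Type u} [DistribLattice D] [BoundedOrder D] (E : EDC D) (Γ : Set D) : Prop :=
  EDCFilter Γ ∧ ⊥ ∉ Γ ∧ ∀ a b : D, a ∉ Γ → b ∉ Γ → E.Cd a b

/-- A co-cluster: an E-filter `Γ` such that whenever `a Ĉ b` for all `b ∉ Γ`, then `a ∉ Γ`. -/
def IsCoCluster {D : Type u} [DistribLattice D] [BoundedOrder D] (E : EDC D) (Γ : Set D) : Prop :=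
  IsEFilter E Γ ∧ ∀ a : D, (∀ b ∉ Γ, E.Cd a b) → a ∉ Γ

theorem IsCoCluster.subset_of_isEFilter {D : Type u} [DistribLattice D] [BoundedOrder D]
    {E : EDC D} {Γ Δ : Set D} (hΓ : IsCoCluster E Γ) (hΔ : IsEFilter E Δ) (hΔΓ : Δ ⊆ Γ) :
    Γ ⊆ Δ := by
  intro a haΓ
  by_contra haΔ
  refine hΓ.2 a (fun b hbΓ => ?_) haΓ
  exact hΔ.2.2 a b haΔ (fun hbΔ => hbΓ (hΔΓ hbΔ))

/-- every co-cluster is a minimal E-filter. -/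
theorem stmt19 {D : Type u} [DistribLattice D] [BoundedOrder D] (E : EDC D)
    (Γ : Set D) (hΓ : IsCoCluster E Γ) :
    ¬ ∃ Δ : Set D, IsEFilter E Δ ∧ Δ ⊂ Γ := by
  rintro ⟨Δ, hΔ, hΔΓ⟩
  exact hΔΓ.2 (hΓ.subset_of_isEFilter hΔ hΔΓ.1)
end
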